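/- Limit of cyclic convolution sums for a summable even sequence. Let s ≥ 2 be an integer and let ρ : ℤ → ℝ be even (ρ(−k) = ρ(k)) with Σ_{k∈ℤ} |ρ(k)| < ∞. Then, as n → ∞, (1/n) · Σ_{k_1,…,k_s = 0}^{n−1} ρ(k_2 − k_1) ρ(k_3 − k_2) ⋯ ρ(k_s − k_{s−1}) ρ(k_1 − k_s) converges to Σ_{k_2,…,k_s ∈ ℤ} ρ(k_2) ρ(k_2 − k_3) ρ(k_3 − k_4) ⋯ ρ(k_{s−1} − k_s) ρ(k_s), and this limit equals ⟨ρ^{*(s−1)}, ρ⟩_{ℓ²(ℤ)}, where ρ^{*(s−1)} denotes the (s−1)-fold convolution of ρ with itself; in particular the limiting sum converges absolutely. -/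

import Mathlib

open Filter Finset

/-- Convolution of two sequences indexed by `ℤ`:
`(u*v)(j) = Σ_{n∈ℤ} u(n) v(j−n)`. -/
noncomputable def convZ (u v : ℤ → ℝ) : ℤ → ℝ :=
  fun j => ∑' n : ℤ, u n * v (j - n)

/-- Iterated self-convolution: `convIter u m = u^{*(m+1)}`. -/
noncomputable def convIter (u : ℤ → ℝ) : ℕ → ℤ → ℝ
  | 0 => u
  | (m + 1) => convZ (convIter u m) u

/-
Write a point `k` of the box `[0, n)ˢ` as `t + m` with `t = k 0` and `m 0 = 0`. Since the cyclic
product is invariant under translation, the box average becomes `∑' m, (c_n(m) / n) · P(m)`, where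
`c_n(m)` counts the `t ∈ [0, n)` with `t + m` in the box; as `n - 2 ∑ |m j| ≤ c_n(m) ≤ n`, dominated
convergence gives the limit `∑' m, P(m)`. Parametrizing `m` by its successive differences `d`, the
cyclic product becomes `∏ ρ(d i) · ρ(-∑ d i)`, and the substitution `n = x + ∑ d i` identifies the
series with `∑' n, ρ^{*(s-1)}(n) ρ(-n)`, which is `⟨ρ^{*(s-1)}, ρ⟩` by evenness.
-/

open Topology

section ProductSums

variable {ρ : ℤ → ℝ}

theorem summable_pi_prod {α ι : Type*} [Fintype ι] {f : α → ℝ} (hf₀ : ∀ a, 0 ≤ f a)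
    (hf : Summable f) : Summable fun d : ι → α => ∏ i, f (d i) := by
  classical
  refine summable_of_sum_le (c := ∏ _i : ι, ∑' a, f a)
    (fun d => prod_nonneg fun i _ => hf₀ _) fun u => ?_
  calc ∑ d ∈ u, ∏ i, f (d i)
      ≤ ∑ d ∈ Fintype.piFinset fun i => u.image (· i), ∏ i, f (d i) :=
        sum_le_sum_of_subset_of_nonneg
          (fun d hd => Fintype.mem_piFinset.2 fun i => mem_image_of_mem _ hd)
          (fun d _ _ => prod_nonneg fun i _ => hf₀ _)
    _ = ∏ i, ∑ a ∈ u.image (· i), f a := (prod_univ_sum _ _).symm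
    _ ≤ ∏ _i : ι, ∑' a, f a :=
        prod_le_prod (fun i _ => sum_nonneg fun a _ => hf₀ a)
          (fun i _ => hf.sum_le_tsum _ fun a _ => hf₀ a)

theorem abs_le_tsum_abs {ι : Type*} {f : ι → ℝ} (hf : Summable fun i => |f i|) (i : ι) :
    |f i| ≤ ∑' j, |f j| :=
  hf.le_tsum i fun _ _ => abs_nonneg _

theorem summable_abs_prod_mul {ι : Type*} [Fintype ι] (hρ : Summable fun k => |ρ k|)
    {g : (ι → ℤ) → ℝ} {C : ℝ} (hg : ∀ e, |g e| ≤ C) :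
    Summable fun e : ι → ℤ => |(∏ i, ρ (e i)) * g e| := by
  refine ((summable_pi_prod (fun _ => abs_nonneg _) hρ).mul_right C).of_nonneg_of_le
    (fun _ => abs_nonneg _) fun e => ?_
  rw [abs_mul, abs_prod]
  exact mul_le_mul_of_nonneg_left (hg e) (prod_nonneg fun i _ => abs_nonneg _)

/-- Substituting `n = x + ∑ i, e i` turns the double series into a single series over
`Fin.cons x e`. -/
theorem tsum_tsum_prod_mul_sub_mul (hρ : Summable fun k => |ρ k|) {h : ℤ → ℝ} {C : ℝ}
    (hh : ∀ n, |h n| ≤ C) (m : ℕ) :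
    ∑' n, (∑' e : Fin m → ℤ, (∏ i, ρ (e i)) * ρ (n - ∑ i, e i)) * h n =
      ∑' e : Fin (m + 1) → ℤ, (∏ i, ρ (e i)) * h (∑ i, e i) := by
  set H : (Fin (m + 1) → ℤ) → ℝ := fun e => (∏ i, ρ (e i)) * h (∑ i, e i)
  set F : ℤ × (Fin m → ℤ) → ℝ := fun p => (∏ i, ρ (p.2 i)) * ρ (p.1 - ∑ i, p.2 i) * h p.1
  let shear : ℤ × (Fin m → ℤ) ≃ ℤ × (Fin m → ℤ) :=
    (Equiv.prodComm _ _).trans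
      ((Equiv.prodShear (Equiv.refl _) fun e => Equiv.addRight (∑ i, e i)).trans
        (Equiv.prodComm _ _))
  have hF : F ∘ shear = H ∘ Fin.consEquiv (fun _ => ℤ) := by
    ext ⟨x, e⟩
    simp only [F, H, shear, Function.comp_apply, Equiv.trans_apply, Equiv.prodComm_apply,
      Equiv.prodShear_apply, Prod.swap, Equiv.refl_apply, Equiv.coe_addRight, Fin.consEquiv_apply,
      Fin.prod_univ_succ, Fin.sum_univ_succ, Fin.cons_zero, Fin.cons_succ, add_sub_cancel_right]
    ring
  have hH : Summable H :=
    (summable_abs_prod_mul hρ (g := fun e => h (∑ i, e i)) fun e => hh _).of_abs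
  have hFsum : Summable F := by
    rw [← shear.summable_iff, hF, (Fin.consEquiv _).summable_iff]
    exact hH
  calc ∑' n, (∑' e : Fin m → ℤ, (∏ i, ρ (e i)) * ρ (n - ∑ i, e i)) * h n
      = ∑' p, F p := by
        rw [hFsum.tsum_prod]
        exact tsum_congr fun n => tsum_mul_right.symm
    _ = ∑' p, H (Fin.consEquiv (fun _ => ℤ) p) := by
        rw [← shear.tsum_eq]
        exact tsum_congr fun p => congrFun hF p
    _ = ∑' e, H e := (Fin.consEquiv _).tsum_eq H

end ProductSums

section Convolution

variable {ρ : ℤ → ℝ}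

theorem convIter_eq_tsum_prod_mul (hρ : Summable fun k => |ρ k|) (m : ℕ) (n : ℤ) :
    convIter ρ m n = ∑' e : Fin m → ℤ, (∏ i, ρ (e i)) * ρ (n - ∑ i, e i) := by
  induction m generalizing n with
  | zero => simp [convIter]
  | succ m ih =>
    rw [convIter, convZ]
    simp_rw [ih]
    exact tsum_tsum_prod_mul_sub_mul hρ (fun j => abs_le_tsum_abs hρ (n - j)) m

theorem tsum_convIter_mul (hρ : Summable fun k => |ρ k|) {h : ℤ → ℝ} {C : ℝ}
    (hh : ∀ n, |h n| ≤ C) (m : ℕ) :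
    ∑' n, convIter ρ m n * h n = ∑' e : Fin (m + 1) → ℤ, (∏ i, ρ (e i)) * h (∑ i, e i) := by
  simp_rw [convIter_eq_tsum_prod_mul hρ]
  exact tsum_tsum_prod_mul_sub_mul hρ hh m

end Convolution

section CyclicProduct

/-- The index `j + 1` wraps around in `Fin s`, so the last factor is `ρ (k 0 - k (s - 1))`. -/
def cyclicProd {s : ℕ} [NeZero s] (ρ : ℤ → ℝ) (k : Fin s → ℤ) : ℝ :=
  ∏ j, ρ (k (j + 1) - k j)

theorem cyclicProd_add_const {s : ℕ} [NeZero s] (ρ : ℤ → ℝ) (k : Fin s → ℤ) (c : ℤ) :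
    cyclicProd ρ (fun j => k j + c) = cyclicProd ρ k := by
  simp only [cyclicProd, add_sub_add_right_eq_sub]

theorem Fin.partialSum_last {M : Type*} [AddCommMonoid M] {n : ℕ} (d : Fin n → M) :
    Fin.partialSum d (Fin.last n) = ∑ i, d i := by
  rw [Fin.partialSum, Fin.val_last, List.take_of_length_le (by simp), List.sum_ofFn]

theorem cyclicProd_partialSum {n : ℕ} (ρ : ℤ → ℝ) (d : Fin n → ℤ) :
    cyclicProd ρ (Fin.partialSum d) = (∏ i, ρ (d i)) * ρ (-∑ i, d i) := by
  rw [cyclicProd, Fin.prod_univ_castSucc, Fin.last_add_one, Fin.partialSum_zero,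
    Fin.partialSum_last, zero_sub]
  congr 1
  refine prod_congr rfl fun i _ => ?_
  rw [Fin.coeSucc_eq_succ, Fin.partialSum_succ, add_sub_cancel_left]

def Fin.partialSumEquiv (G : Type*) [AddCommGroup G] (n : ℕ) :
    (Fin n → G) ≃ {k : Fin (n + 1) → G // k 0 = 0} where
  toFun d := ⟨Fin.partialSum d, Fin.partialSum_zero d⟩
  invFun k i := k.1 i.succ - k.1 i.castSucc
  left_inv d := funext fun i => by simp [Fin.partialSum_succ]
  right_inv k := by
    ext1
    have := Fin.partialSum_left_neg k.1
    simp only [k.2, zero_vadd, neg_add_eq_sub] at this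
    exact this

end CyclicProduct

section BoxAverage

variable {s : ℕ}

def translateCount (n : ℕ) (m : Fin s → ℤ) : ℕ :=
  #((range n).filter fun t : ℕ => ∀ j, 0 ≤ (t : ℤ) + m j ∧ (t : ℤ) + m j < n)

theorem translateCount_le (n : ℕ) (m : Fin s → ℤ) : translateCount n m ≤ n :=
  (card_filter_le _ _).trans (card_range n).le

theorem le_translateCount_add {n M : ℕ} {m : Fin s → ℤ} (hM : ∀ j, (m j).natAbs ≤ M) :
    n ≤ translateCount n m + 2 * M := by
  have hIco : #(Ico M (n - M)) ≤ translateCount n m := card_le_card fun t ht => by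
    rw [mem_Ico] at ht
    rw [mem_filter, mem_range]
    refine ⟨by omega, fun j => ?_⟩
    have := hM j
    omega
  rw [Nat.card_Ico] at hIco
  omega

theorem tendsto_translateCount_div (m : Fin s → ℤ) :
    Tendsto (fun n : ℕ => (translateCount n m : ℝ) / n) atTop (𝓝 1) := by
  set M := ∑ j, (m j).natAbs
  have hM : ∀ j, (m j).natAbs ≤ M := fun j =>
    single_le_sum (f := fun j => (m j).natAbs) (fun _ _ => Nat.zero_le _) (mem_univ j)
  have hlow : Tendsto (fun n : ℕ => 1 - (2 * M : ℝ) / n) atTop (𝓝 1) := by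
    simpa using (tendsto_const_div_atTop_nhds_zero_nat (2 * M : ℝ)).const_sub 1
  refine tendsto_of_tendsto_of_tendsto_of_le_of_le' hlow tendsto_const_nhds ?_
    (Eventually.of_forall fun n => div_le_one_of_le₀ (mod_cast translateCount_le n m) n.cast_nonneg)
  filter_upwards [eventually_gt_atTop 0] with n hn
  have hn' : (0 : ℝ) < n := mod_cast hn
  have hcount : (n : ℝ) ≤ translateCount n m + 2 * M := mod_cast le_translateCount_add hM
  rw [one_sub_div hn'.ne', div_le_div_iff_of_pos_right hn']
  linarith

variable [NeZero s]

theorem hasSum_ite_box {G : (Fin s → ℤ) → ℝ} (hG : ∀ k c, G (fun j => k j + c) = G k)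
    (n : ℕ) :
    HasSum (fun p : {m : Fin s → ℤ // m 0 = 0} × ℕ =>
        if ∀ j, 0 ≤ (p.2 : ℤ) + p.1.1 j ∧ (p.2 : ℤ) + p.1.1 j < n then G p.1 else 0)
      (∑ k : Fin s → Fin n, G fun j => ((k j : ℕ) : ℤ)) := by
  let φ : (Fin s → Fin n) → {m : Fin s → ℤ // m 0 = 0} × ℕ :=
    fun k => (⟨fun j => k j - k 0, sub_self _⟩, k 0)
  have hφ : Function.Injective φ := by
    intro k k' h
    simp only [φ, Prod.ext_iff, Subtype.ext_iff, funext_iff] at h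
    funext j
    ext
    have := h.1 j
    omega
  refine (hφ.hasSum_iff fun p hp => if_neg fun hbox => hp ?_).1 ?_
  · obtain ⟨m, t⟩ := p
    dsimp only at hbox
    refine ⟨fun j => ⟨(t + m.1 j).toNat, by have := hbox j; omega⟩, ?_⟩
    have hm0 := m.2
    simp only [φ, Prod.ext_iff, Subtype.ext_iff, funext_iff]
    refine ⟨fun j => ?_, by simp [hm0]⟩
    simp only [hm0]
    have := hbox j
    omega
  · convert hasSum_fintype _ with k
    simp only [φ, Function.comp_apply]
    rw [if_pos fun j => by simp]
    simpa [sub_eq_add_neg] using (hG (fun j => ((k j : ℕ) : ℤ)) (-(k 0 : ℕ))).symm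

theorem sum_box_eq_tsum_translateCount_mul {G : (Fin s → ℤ) → ℝ}
    (hG : ∀ k c, G (fun j => k j + c) = G k) (n : ℕ) :
    ∑ k : Fin s → Fin n, G (fun j => ((k j : ℕ) : ℤ)) =
      ∑' m : {m : Fin s → ℤ // m 0 = 0}, (translateCount n m.1 : ℝ) * G m := by
  have hsplit := hasSum_ite_box hG n
  rw [← hsplit.tsum_eq, hsplit.summable.tsum_prod]
  refine tsum_congr fun m => ?_
  rw [tsum_eq_sum (s := range n) fun t ht => if_neg fun h => ?_]
  · simp [translateCount, sum_ite]
  · have := (h 0).2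
    simp only [m.2, add_zero, Nat.cast_lt] at this
    exact ht (mem_range.2 this)

theorem tendsto_box_average_of_add_const_invariant {G : (Fin s → ℤ) → ℝ}
    (hG : ∀ k c, G (fun j => k j + c) = G k)
    (hsum : Summable fun m : {m : Fin s → ℤ // m 0 = 0} => |G m|) :
    Tendsto (fun n : ℕ => (1 / (n : ℝ)) * ∑ k : Fin s → Fin n, G fun j => ((k j : ℕ) : ℤ))
      atTop (𝓝 (∑' m : {m : Fin s → ℤ // m 0 = 0}, G m)) := by
  simp_rw [sum_box_eq_tsum_translateCount_mul hG, ← tsum_mul_left]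
  refine tendsto_tsum_of_dominated_convergence hsum (fun m => ?_)
    (Eventually.of_forall fun n m => ?_)
  · have := (tendsto_translateCount_div m.1).mul_const (G m)
    rw [one_mul] at this
    exact this.congr fun n => by ring
  · have h₀ : 0 ≤ (translateCount n m.1 : ℝ) / n := by positivity
    have h₁ : (translateCount n m.1 : ℝ) / n ≤ 1 :=
      div_le_one_of_le₀ (mod_cast translateCount_le n m.1) n.cast_nonneg
    rw [Real.norm_eq_abs, one_div_mul_eq_div, mul_div_right_comm, abs_mul, abs_of_nonneg h₀]
    exact mul_le_of_le_one_left (abs_nonneg _) h₁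

end BoxAverage

theorem cyclic_convolution_sum_limit
    (s : ℕ) [NeZero s] (hs : 2 ≤ s)
    (ρ : ℤ → ℝ) (heven : ∀ k : ℤ, ρ (-k) = ρ k)
    (hsum : Summable (fun k : ℤ => |ρ k|)) :
    Summable (fun k : {k : Fin s → ℤ // k 0 = 0} =>
      |∏ j : Fin s, ρ (k.1 (j + 1) - k.1 j)|) ∧
    Tendsto (fun n : ℕ =>
        (1 / (n : ℝ)) * ∑ k : Fin s → Fin n,
          ∏ j : Fin s, ρ (((k (j + 1) : ℕ) : ℤ) - ((k j : ℕ) : ℤ)))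
      atTop
      (nhds (∑' k : {k : Fin s → ℤ // k 0 = 0},
        ∏ j : Fin s, ρ (k.1 (j + 1) - k.1 j))) ∧
    (∑' k : {k : Fin s → ℤ // k 0 = 0}, ∏ j : Fin s, ρ (k.1 (j + 1) - k.1 j)) =
      ∑' k : ℤ, convIter ρ (s - 2) k * ρ k := by
  obtain ⟨r, rfl⟩ : ∃ r, s = r + 2 := ⟨s - 2, by omega⟩
  have hbound := abs_le_tsum_abs hsum
  have hdiff : ∀ d : Fin (r + 1) → ℤ,
      cyclicProd ρ (Fin.partialSumEquiv ℤ (r + 1) d).1 = (∏ i, ρ (d i)) * ρ (∑ i, d i) :=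
    fun d => by rw [← heven]; exact cyclicProd_partialSum ρ d
  have habs : Summable fun k : {k : Fin (r + 2) → ℤ // k 0 = 0} => |cyclicProd ρ k.1| := by
    rw [← (Fin.partialSumEquiv ℤ (r + 1)).summable_iff]
    simpa only [Function.comp_def, hdiff] using summable_abs_prod_mul hsum (fun d => hbound _)
  refine ⟨habs, ?_, ?_⟩
  · simpa only [cyclicProd] using
      tendsto_box_average_of_add_const_invariant (cyclicProd_add_const ρ) habs
  · rw [Nat.add_sub_cancel, tsum_convIter_mul hsum hbound,
      ← (Fin.partialSumEquiv ℤ (r + 1)).tsum_eq]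
    exact tsum_congr hdiff
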